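/- arXiv:2303.11669 — 3 statements merged into one kernel-verified Lean document; each statement's English description precedes it below -/
import Mathlib

section
/- Let $q(\mathbf{y}) = \int \prod_{m=1}^M \mathcal{N}(y_m; x, \sigma^2 I_d)\, p(x)\, dx$ be the Gaussian M-density with equal noise levels. Then there exists a function $\varphi: \mathbb{R}^d \to \mathbb{R}$ and a constant $C$ such that $-\log q(\mathbf{y}) = \frac{M}{2\sigma^2}\left(\overline{\|y\|^2} - \|\overline{y}\|^2\right) + \varphi(\overline{y}) + C$; i.e., the energy depends on $\mathbf{y}$ only through $\overline{y}$ and the within-sample variance term. -/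
/-!
Completing the square in `x`,
`∑ m ‖y m - x‖² = M (mean ‖y‖² - ‖ȳ‖²) + M ‖ȳ - x‖²`,
so the product of the `M` Gaussian factors splits into a factor depending on the within-sample
variance alone and a single Gaussian of variance `σ² / M` centred at `ȳ`. Integrating against `p`
leaves a function of `ȳ` only, which is positive because `p ≥ 0` has positive mass; its negative
logarithm is `φ`, and the normalising constants of the Gaussians give `C`.
-/

open MeasureTheory Finset

/-- Isotropic Gaussian density `N(z; 0, σ² I_d)` on `ℝ^d`. -/
noncomputable def gaussPdf (d : ℕ) (σ : ℝ) (z : EuclideanSpace ℝ (Fin d)) : ℝ :=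
  (2 * Real.pi * σ ^ 2) ^ (-(d : ℝ) / 2) * Real.exp (-‖z‖ ^ 2 / (2 * σ ^ 2))

/-- Gaussian M-density: `q(y₁,…,y_M) = ∫ ∏ m N(y m; x, σ² I_d) p(x) dx`. -/
noncomputable def mDensity (d M : ℕ) (σ : ℝ) (p : EuclideanSpace ℝ (Fin d) → ℝ)
    (y : Fin M → EuclideanSpace ℝ (Fin d)) : ℝ :=
  ∫ x, (∏ m, gaussPdf d σ (y m - x)) * p x

noncomputable section

section SampleStatistics

variable {ι E : Type*} [Fintype ι] [NormedAddCommGroup E] [InnerProductSpace ℝ E]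

def sampleMean (y : ι → E) : E := (Fintype.card ι : ℝ)⁻¹ • ∑ i, y i

def sampleVariance (y : ι → E) : ℝ :=
  (Fintype.card ι : ℝ)⁻¹ * ∑ i, ‖y i‖ ^ 2 - ‖sampleMean y‖ ^ 2

theorem sum_norm_sub_sq_eq_card_mul (y : ι → E) (x : E) :
    ∑ i, ‖y i - x‖ ^ 2 =
      Fintype.card ι * sampleVariance y + Fintype.card ι * ‖sampleMean y - x‖ ^ 2 := by
  rcases isEmpty_or_nonempty ι with _ | _
  · simp
  have hcard : (Fintype.card ι : ℝ) ≠ 0 := Nat.cast_ne_zero.mpr Fintype.card_ne_zero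
  have hmean : ∑ i, y i = (Fintype.card ι : ℝ) • sampleMean y := by
    rw [sampleMean, smul_inv_smul₀ hcard]
  simp only [sampleVariance, norm_sub_sq_real, sum_add_distrib, sum_sub_distrib, ← mul_sum,
    ← sum_inner, hmean, real_inner_smul_left, sum_const, card_univ, nsmul_eq_mul]
  field_simp
  ring

end SampleStatistics

local notation "ℝ^" d => EuclideanSpace ℝ (Fin d)

theorem prod_gaussPdf_sub {ι : Type*} [Fintype ι] (d : ℕ) (σ : ℝ) (y : ι → ℝ^d) (x : ℝ^d) :
    ∏ i, gaussPdf d σ (y i - x) =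
      ((2 * Real.pi * σ ^ 2) ^ (-(d : ℝ) / 2)) ^ Fintype.card ι *
        Real.exp (-(Fintype.card ι * sampleVariance y) / (2 * σ ^ 2)) *
        Real.exp (-‖sampleMean y - x‖ ^ 2 / (2 * (σ ^ 2 / Fintype.card ι))) := by
  simp only [gaussPdf, prod_mul_distrib, prod_const, card_univ, ← Real.exp_sum, mul_assoc,
    ← Real.exp_add]
  congr 2
  rw [← sum_div, sum_neg_distrib, sum_norm_sub_sq_eq_card_mul, ← mul_div_assoc,
    div_div_eq_mul_div]
  ring

/-- Up to the factor `(2πτ)^(d/2)`, this is `𝔼[p X]` for `X ∼ N(z, τ I_d)`. -/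
def gaussSmoothing (d : ℕ) (τ : ℝ) (p : (ℝ^d) → ℝ) (z : ℝ^d) : ℝ :=
  ∫ x, Real.exp (-‖z - x‖ ^ 2 / (2 * τ)) * p x

theorem mDensity_eq_mul_gaussSmoothing (d M : ℕ) (σ : ℝ) (p : (ℝ^d) → ℝ)
    (y : Fin M → ℝ^d) :
    mDensity d M σ p y =
      ((2 * Real.pi * σ ^ 2) ^ (-(d : ℝ) / 2)) ^ M *
        Real.exp (-(M * sampleVariance y) / (2 * σ ^ 2)) *
        gaussSmoothing d (σ ^ 2 / M) p (sampleMean y) := by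
  simp only [mDensity, gaussSmoothing, prod_gaussPdf_sub, Fintype.card_fin, mul_assoc,
    integral_const_mul]

theorem integral_mul_pos_of_integral_pos {α : Type*} [MeasurableSpace α] {μ : Measure α}
    {f g : α → ℝ} {c : ℝ} (hf : AEStronglyMeasurable f μ) (hf_pos : ∀ x, 0 < f x)
    (hf_le : ∀ x, f x ≤ c) (hg_nonneg : 0 ≤ᵐ[μ] g) (hg : 0 < ∫ x, g x ∂μ) :
    0 < ∫ x, f x * g x ∂μ := by
  have hg_int : Integrable g μ := Integrable.of_integral_ne_zero hg.ne'
  have hfg_int : Integrable (fun x => f x * g x) μ :=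
    hg_int.bdd_mul hf (ae_of_all _ fun x => (Real.norm_of_nonneg (hf_pos x).le).trans_le (hf_le x))
  have hsupport : Function.support (fun x => f x * g x) = Function.support g := by
    ext x
    simp [(hf_pos x).ne']
  rw [integral_pos_iff_support_of_nonneg_ae hg_nonneg hg_int] at hg
  rwa [integral_pos_iff_support_of_nonneg_ae
    (hg_nonneg.mono fun x hx => mul_nonneg (hf_pos x).le hx) hfg_int, hsupport]

theorem gaussSmoothing_pos {d : ℕ} {τ : ℝ} (hτ : 0 ≤ τ) {p : (ℝ^d) → ℝ}
    (hp_nonneg : ∀ x, 0 ≤ p x) (hp : 0 < ∫ x, p x) (z : ℝ^d) :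
    0 < gaussSmoothing d τ p z :=
  integral_mul_pos_of_integral_pos (by fun_prop : Continuous _).aestronglyMeasurable
    (fun _ => Real.exp_pos _)
    (fun x => Real.exp_le_one_iff.mpr (div_nonpos_of_nonpos_of_nonneg
      (neg_nonpos.mpr (by positivity)) (by positivity)))
    (ae_of_all _ hp_nonneg) hp

end

theorem mDensity_energy_universal_form_general
    (d M : ℕ) (σ : ℝ) (hσ : 0 < σ)
    (p : EuclideanSpace ℝ (Fin d) → ℝ)
    (hp_nonneg : ∀ x, 0 ≤ p x) (hp_int : ∫ x, p x = 1) :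
    ∃ (φ : EuclideanSpace ℝ (Fin d) → ℝ) (C : ℝ),
      ∀ y : Fin M → EuclideanSpace ℝ (Fin d),
        -Real.log (mDensity d M σ p y) =
          (M : ℝ) / (2 * σ ^ 2) *
            ((M : ℝ)⁻¹ * ∑ m, ‖y m‖ ^ 2 - ‖(M : ℝ)⁻¹ • ∑ m, y m‖ ^ 2)
          + φ ((M : ℝ)⁻¹ • ∑ m, y m) + C := by
  have hA : 0 < (2 * Real.pi * σ ^ 2) ^ (-(d : ℝ) / 2) := Real.rpow_pos_of_pos (by positivity) _
  refine ⟨fun z => -Real.log (gaussSmoothing d (σ ^ 2 / M) p z),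
    -(M * Real.log ((2 * Real.pi * σ ^ 2) ^ (-(d : ℝ) / 2))), fun y => ?_⟩
  have hsmooth := gaussSmoothing_pos (τ := σ ^ 2 / M) (by positivity) hp_nonneg
    (hp_int ▸ one_pos) (sampleMean y)
  have hmean : sampleMean y = (M : ℝ)⁻¹ • ∑ m, y m := by simp [sampleMean]
  have hvar : sampleVariance y = (M : ℝ)⁻¹ * ∑ m, ‖y m‖ ^ 2 - ‖sampleMean y‖ ^ 2 := by
    simp [sampleVariance]
  rw [mDensity_eq_mul_gaussSmoothing, Real.log_mul (by positivity) hsmooth.ne',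
    Real.log_mul (by positivity) (Real.exp_ne_zero _), Real.log_exp, Real.log_pow, ← hmean,
    ← hvar]
  ring

/-- The energy of the Gaussian M-density with equal noise levels has the
universal form `-log q(y) = (M/2σ²)(mean‖y‖² - ‖ȳ‖²) + φ(ȳ) + C` for some
`φ : ℝ^d → ℝ` and constant `C`: the energy depends on `y` only through `ȳ` and the
within-sample variance. -/
theorem mDensity_energy_universal_form
    (d M : ℕ) (hM : 1 ≤ M) (σ : ℝ) (hσ : 0 < σ)
    (p : EuclideanSpace ℝ (Fin d) → ℝ) (hp_meas : Measurable p)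
    (hp_nonneg : ∀ x, 0 ≤ p x) (hp_int : ∫ x, p x = 1)
    (hp_integrable : Integrable p) :
    ∃ (φ : EuclideanSpace ℝ (Fin d) → ℝ) (C : ℝ),
      ∀ y : Fin M → EuclideanSpace ℝ (Fin d),
        -Real.log (mDensity d M σ p y) =
          (M : ℝ) / (2 * σ ^ 2) *
            ((M : ℝ)⁻¹ * ∑ m, ‖y m‖ ^ 2 - ‖(M : ℝ)⁻¹ • ∑ m, y m‖ ^ 2)
          + φ ((M : ℝ)⁻¹ • ∑ m, y m) + C :=
  mDensity_energy_universal_form_general d M σ hσ p hp_nonneg hp_int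
end

section
/- (Gaussian empirical Bayes / Miyasawa) Let $X \sim p$ on $\mathbb{R}^d$ and $Y = X + \mathcal{N}(0, \sigma^2 I_d)$, with smoothed density $q(y) = \int \mathcal{N}(y; x, \sigma^2 I_d) p(x) dx$. Then the posterior mean satisfies $\mathbb{E}[X \mid Y = y] = y + \sigma^2 \nabla \log q(y)$. -/
open MeasureTheory

/-!
The Gaussian kernel satisfies `σ² ∇_y N(y - x) = (x - y) N(y - x)`. Both `N` and `z ↦ ‖z‖ N(z)`
are bounded, so `q` may be differentiated under the integral sign against the integrable `p`:
`σ² ∇q(y) = ∫ (x - y) N(y - x) p(x) dx = ∫ x N(y - x) p(x) dx - q(y) y`.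
Since `q(y) > 0`, dividing by `q(y)` and using `∇ log q = ∇q / q` gives the identity.
-/

open InnerProductSpace

theorem integral_mul_pos_of_pos {α : Type*} [MeasurableSpace α] {μ : Measure α} {f p : α → ℝ}
    (hf : ∀ x, 0 < f x) (hp : 0 ≤ p) (hfp : Integrable (fun x => f x * p x) μ)
    (hp_pos : 0 < ∫ x, p x ∂μ) : 0 < ∫ x, f x * p x ∂μ := by
  have hp_int : Integrable p μ := .of_integral_ne_zero hp_pos.ne'
  have h_supp : Function.support (fun x => f x * p x) = Function.support p := by
    ext x; simp [(hf x).ne']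
  rw [integral_pos_iff_support_of_nonneg (fun x => mul_nonneg (hf x).le (hp x)) hfp, h_supp]
  rwa [integral_pos_iff_support_of_nonneg hp hp_int] at hp_pos

theorem HasGradientAt.log {E : Type*} [NormedAddCommGroup E] [InnerProductSpace ℝ E]
    [CompleteSpace E] {f : E → ℝ} {g x : E} (hf : HasGradientAt f g x) (hx : f x ≠ 0) :
    HasGradientAt (fun z => Real.log (f z)) ((f x)⁻¹ • g) x := by
  rw [hasGradientAt_iff_hasFDerivAt, LinearIsometryEquiv.map_smul]
  exact hf.hasFDerivAt.log hx

section KernelSmoothing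

variable {E : Type*} [NormedAddCommGroup E] [InnerProductSpace ℝ E] [CompleteSpace E]
  [SecondCountableTopology E] [MeasurableSpace E] [OpensMeasurableSpace E] {μ : Measure E}

theorem hasGradientAt_integral_kernel_mul {k : E → ℝ} {k' : E → E} {B C : ℝ}
    (hk : ∀ z, HasGradientAt k (k' z) z) (hk_bdd : ∀ z, |k z| ≤ B)
    (hk'_cont : Continuous k') (hk'_bdd : ∀ z, ‖k' z‖ ≤ C)
    {p : E → ℝ} (hp : Integrable p μ) (y : E) :
    HasGradientAt (fun y => ∫ x, k (y - x) * p x ∂μ) (∫ x, p x • k' (y - x) ∂μ) y := by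
  have hk_cont : Continuous k := continuous_iff_continuousAt.2 fun z => (hk z).continuousAt
  have h_sub (y' : E) : Continuous fun x : E => y' - x := continuous_const.sub continuous_id
  have h := hasFDerivAt_integral_of_dominated_of_fderiv_le (μ := μ) (x₀ := y)
    (F := fun y x => k (y - x) * p x) (F' := fun y x => toDual ℝ E (p x • k' (y - x)))
    (bound := fun x => C * |p x|) Filter.univ_mem
    (Filter.Eventually.of_forall fun y' =>
      (hk_cont.comp (h_sub y')).aestronglyMeasurable.mul hp.aestronglyMeasurable)
    (hp.bdd_mul (hk_cont.comp (h_sub y)).aestronglyMeasurable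
      (Filter.Eventually.of_forall fun x => hk_bdd (y - x)))
    ((toDual ℝ E).continuous.comp_aestronglyMeasurable
      (hp.aestronglyMeasurable.smul (hk'_cont.comp (h_sub y)).aestronglyMeasurable))
    (Filter.Eventually.of_forall fun x y' _ => by
      rw [LinearIsometryEquiv.norm_map, norm_smul, Real.norm_eq_abs, mul_comm]
      exact mul_le_mul_of_nonneg_right (hk'_bdd _) (abs_nonneg _))
    (hp.abs.const_mul C)
    (Filter.Eventually.of_forall fun x y' _ => by
      simpa [map_smul] using
        (((hk (y' - x)).hasFDerivAt.comp y' ((hasFDerivAt_id y').sub_const x)).mul_const (p x)))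
  exact h.congr_fderiv ((toDual ℝ E).toLinearIsometry.integral_comp_comm _)

end KernelSmoothing

theorem mul_exp_neg_sq_div_le {σ : ℝ} (hσ : 0 < σ) (t : ℝ) :
    t * Real.exp (-t ^ 2 / (2 * σ ^ 2)) ≤ σ := by
  set u := t ^ 2 / (2 * σ ^ 2)
  have h_lin : t ≤ σ * (u + 1) := by
    simp only [u]
    field_simp
    nlinarith [sq_nonneg (t - σ)]
  calc t * Real.exp (-t ^ 2 / (2 * σ ^ 2))
      ≤ σ * Real.exp u * Real.exp (-u) := by
        rw [neg_div]
        gcongr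
        exact h_lin.trans (mul_le_mul_of_nonneg_left (Real.add_one_le_exp u) hσ.le)
    _ = σ := by rw [mul_assoc, ← Real.exp_add, add_neg_cancel, Real.exp_zero, mul_one]

section Gaussian

variable {d : ℕ} {σ : ℝ}

theorem gaussPdf_pos (hσ : 0 < σ) (z : EuclideanSpace ℝ (Fin d)) : 0 < gaussPdf d σ z := by
  unfold gaussPdf
  positivity

theorem gaussPdf_le (hσ : 0 < σ) (z : EuclideanSpace ℝ (Fin d)) :
    gaussPdf d σ z ≤ (2 * Real.pi * σ ^ 2) ^ (-(d : ℝ) / 2) := by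
  refine mul_le_of_le_one_right (by positivity) (Real.exp_le_one_iff.2 ?_)
  exact div_nonpos_of_nonpos_of_nonneg (neg_nonpos.2 (sq_nonneg _)) (by positivity)

theorem gaussPdf_mul_norm_le (hσ : 0 < σ) (z : EuclideanSpace ℝ (Fin d)) :
    gaussPdf d σ z * ‖z‖ ≤ (2 * Real.pi * σ ^ 2) ^ (-(d : ℝ) / 2) * σ := by
  rw [gaussPdf, mul_assoc, mul_comm (Real.exp _)]
  exact mul_le_mul_of_nonneg_left (mul_exp_neg_sq_div_le hσ ‖z‖) (by positivity)

theorem hasGradientAt_gaussPdf (z : EuclideanSpace ℝ (Fin d)) :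
    HasGradientAt (gaussPdf d σ) (-(σ ^ 2)⁻¹ • gaussPdf d σ z • z) z := by
  have h_profile := (((hasDerivAt_neg (‖z‖ ^ 2)).div_const (2 * σ ^ 2)).exp).const_mul
    ((2 * Real.pi * σ ^ 2) ^ (-(d : ℝ) / 2))
  rw [hasGradientAt_iff_hasFDerivAt]
  refine (h_profile.comp_hasFDerivAt z (hasStrictFDerivAt_norm_sq z).hasFDerivAt).congr_fderiv ?_
  ext w
  simp only [smul_apply, innerSL_apply_apply, nsmul_eq_mul, Nat.cast_ofNat,
    smul_eq_mul, gaussPdf, neg_smul, map_neg, map_smul, neg_apply, toDual_apply_apply]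
  ring

variable {p : EuclideanSpace ℝ (Fin d) → ℝ}

theorem integrable_gaussPdf_sub_mul (hσ : 0 < σ) (hp : Integrable p)
    (y : EuclideanSpace ℝ (Fin d)) : Integrable (fun x => gaussPdf d σ (y - x) * p x) := by
  refine hp.bdd_mul (c := (2 * Real.pi * σ ^ 2) ^ (-(d : ℝ) / 2)) (by unfold gaussPdf; fun_prop)
    (Filter.Eventually.of_forall fun x => ?_)
  rw [Real.norm_of_nonneg (gaussPdf_pos hσ _).le]
  exact gaussPdf_le hσ _

theorem integrable_gaussPdf_sub_mul_smul_sub (hσ : 0 < σ) (hp : Integrable p)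
    (y : EuclideanSpace ℝ (Fin d)) :
    Integrable (fun x => (gaussPdf d σ (y - x) * p x) • (x - y)) := by
  have h := hp.smul_bdd ((2 * Real.pi * σ ^ 2) ^ (-(d : ℝ) / 2) * σ)
    (f := fun x => gaussPdf d σ (y - x) • (x - y)) (by unfold gaussPdf; fun_prop)
    (Filter.Eventually.of_forall fun x => by
      rw [norm_smul, Real.norm_of_nonneg (gaussPdf_pos hσ _).le, ← norm_neg, neg_sub]
      exact gaussPdf_mul_norm_le hσ _)
  refine h.congr (Filter.Eventually.of_forall fun x => ?_)
  rw [Pi.smul_apply', smul_smul, mul_comm]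

theorem hasGradientAt_gaussian_smoothing (hσ : 0 < σ) (hp : Integrable p)
    (y : EuclideanSpace ℝ (Fin d)) :
    HasGradientAt (fun y => ∫ x, gaussPdf d σ (y - x) * p x)
      ((σ ^ 2)⁻¹ • ∫ x, (gaussPdf d σ (y - x) * p x) • (x - y)) y := by
  set c := (2 * Real.pi * σ ^ 2) ^ (-(d : ℝ) / 2)
  have h_bdd (z : EuclideanSpace ℝ (Fin d)) : |gaussPdf d σ z| ≤ c := by
    rw [abs_of_pos (gaussPdf_pos hσ z)]
    exact gaussPdf_le hσ z
  have h_grad_bdd (z : EuclideanSpace ℝ (Fin d)) :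
      ‖-(σ ^ 2)⁻¹ • gaussPdf d σ z • z‖ ≤ (σ ^ 2)⁻¹ * (c * σ) := by
    rw [norm_smul, norm_smul, norm_neg, norm_inv, Real.norm_eq_abs, Real.norm_eq_abs,
      abs_of_pos (gaussPdf_pos hσ z), abs_of_pos (by positivity)]
    exact mul_le_mul_of_nonneg_left (gaussPdf_mul_norm_le hσ z) (inv_nonneg.2 (sq_nonneg σ))
  convert hasGradientAt_integral_kernel_mul hasGradientAt_gaussPdf h_bdd
    (by unfold gaussPdf; fun_prop) h_grad_bdd hp y using 1
  rw [← integral_smul]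
  congr 1
  funext x
  rw [← neg_sub y x]
  module

end Gaussian

theorem miyasawa_empirical_bayes_general
    (d : ℕ) (σ : ℝ) (hσ : 0 < σ)
    (p : EuclideanSpace ℝ (Fin d) → ℝ)
    (hp_nonneg : ∀ x, 0 ≤ p x) (hp_int : ∫ x, p x = 1)
    (q : EuclideanSpace ℝ (Fin d) → ℝ)
    (hq : ∀ y, q y = ∫ x, gaussPdf d σ (y - x) * p x)
    (y : EuclideanSpace ℝ (Fin d)) :
    (q y)⁻¹ • (∫ x, (gaussPdf d σ (y - x) * p x) • x) =
      y + σ ^ 2 • gradient (fun z => Real.log (q z)) y := by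
  have hp : Integrable p := .of_integral_ne_zero (by simp [hp_int])
  have hq_pos : 0 < q y := hq y ▸ integral_mul_pos_of_pos (fun x => gaussPdf_pos hσ (y - x))
    hp_nonneg (integrable_gaussPdf_sub_mul hσ hp y) (by simp [hp_int])
  have h_grad : HasGradientAt q ((σ ^ 2)⁻¹ • ∫ x, (gaussPdf d σ (y - x) * p x) • (x - y)) y := by
    simpa only [← funext hq] using hasGradientAt_gaussian_smoothing hσ hp y
  have h_first_moment : ∫ x, (gaussPdf d σ (y - x) * p x) • x
      = q y • y + ∫ x, (gaussPdf d σ (y - x) * p x) • (x - y) := by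
    rw [hq, ← integral_smul_const,
      ← integral_add ((integrable_gaussPdf_sub_mul hσ hp y).smul_const y)
        (integrable_gaussPdf_sub_mul_smul_sub hσ hp y)]
    congr 1
    funext x
    rw [← smul_add, add_sub_cancel]
  rw [(h_grad.log hq_pos.ne').gradient, h_first_moment]
  match_scalars <;> field_simp

/-- Gaussian empirical Bayes / Miyasawa: with
`q(y) = ∫ N(y; x, σ² I_d) p(x) dx` the Gaussian smoothing of the density `p`, the
posterior mean `E[X | Y = y] = (∫ x N(y;x,σ²I) p(x) dx) / q(y)` satisfies
`E[X | Y = y] = y + σ² ∇ log q(y)`. -/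
theorem miyasawa_empirical_bayes
    (d : ℕ) (σ : ℝ) (hσ : 0 < σ)
    (p : EuclideanSpace ℝ (Fin d) → ℝ) (hp_meas : Measurable p)
    (hp_nonneg : ∀ x, 0 ≤ p x) (hp_int : ∫ x, p x = 1)
    (hp_moment : Integrable (fun x => ‖x‖ * p x))
    (q : EuclideanSpace ℝ (Fin d) → ℝ)
    (hq : ∀ y, q y = ∫ x, gaussPdf d σ (y - x) * p x)
    (y : EuclideanSpace ℝ (Fin d)) :
    (q y)⁻¹ • (∫ x, (gaussPdf d σ (y - x) * p x) • x) =
      y + σ ^ 2 • gradient (fun z => Real.log (q z)) y :=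
  miyasawa_empirical_bayes_general d σ hσ p hp_nonneg hp_int q hq y
end

section
/- Let $p_X = \mathcal{N}(0, \Sigma)$ with $\Sigma = \mathrm{diag}(\tau_1^2,\dots,\tau_d^2)$ and let $\mathbf{F}$ be the $Md \times Md$ precision matrix of the M-density $q(\mathbf{y}) = \int \prod_{m=1}^M \mathcal{N}(y_m; x, \sigma^2 I_d) p(x) dx$. Then the eigenvalues of $\mathbf{F}$ are: $\sigma^{-2}$ with multiplicity $(M-1)d$, and $\sigma^{-2}/(1 + M\sigma^{-2}\tau_i^2)$ for each $i = 1,\dots,d$. -/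
/-!
Over the coordinates `F` is block diagonal, so its characteristic polynomial is the product of
those of the `M × M` blocks. Each block is `(a - b) • 1 + b • J` with `J` the all-ones matrix,
a scalar shift of the rank-one matrix `b • J`, whose characteristic polynomial is
`X ^ (M - 1) * (X - M b)`. Hence every block has the eigenvalue `a - b = σ⁻²` with multiplicity
`M - 1` and the simple eigenvalue `a - b + M b = σ⁻² / (1 + M σ⁻² τᵢ²)`.
-/

open Polynomial

namespace Matrix

variable {R : Type*} [CommRing R] {n : Type*} [Fintype n] [DecidableEq n]

theorem charmatrix_blockDiagonal {o : Type*} [Fintype o] [DecidableEq o]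
    (B : o → Matrix n n R) :
    charmatrix (blockDiagonal B) = blockDiagonal fun k => charmatrix (B k) := by
  ext ⟨i, k⟩ ⟨j, l⟩ : 2
  simp only [charmatrix_apply, blockDiagonal_apply, diagonal_apply, Prod.mk.injEq]
  split_ifs <;> simp_all

theorem charpoly_blockDiagonal {o : Type*} [Fintype o] [DecidableEq o] (B : o → Matrix n n R) :
    (blockDiagonal B).charpoly = ∏ k, (B k).charpoly := by
  rw [charpoly, charmatrix_blockDiagonal, det_blockDiagonal]
  rfl

theorem charpoly_add_scalar (A : Matrix n n R) (c : R) :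
    (A + scalar n c).charpoly = A.charpoly.comp (X - C c) := by
  simpa [sub_eq_add_neg] using charpoly_sub_scalar A (-c)

theorem charpoly_of_ite_eq [Nonempty n] (a b : R) :
    (of fun i j : n => if i = j then a else b).charpoly
      = (X - C (a - b)) ^ (Fintype.card n - 1) * (X - C (a - b + Fintype.card n * b)) := by
  have hsplit : (of fun i j : n => if i = j then a else b)
      = vecMulVec (fun _ => b) (fun _ => 1) + scalar n (a - b) := by
    ext i j
    by_cases hij : i = j <;> simp [vecMulVec_apply, hij]
  have hcard : Fintype.card n = Fintype.card n - 1 + 1 :=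
    (Nat.sub_add_cancel Fintype.card_pos).symm
  rw [hsplit, charpoly_add_scalar, charpoly_vecMulVec]
  conv_lhs => rw [hcard]
  simp [sub_comp, smul_eq_C_mul, pow_succ, dotProduct]
  ring

end Matrix

open Matrix

theorem mdensity_precision_eigenvalues_general
    (d M : ℕ) (hM : 1 ≤ M) (σ : ℝ)
    (τ : Fin d → ℝ) (hτ : ∀ i, 0 < τ i)
    (ω2 a b : Fin d → ℝ)
    (hω2 : ∀ i, ω2 i = ((M : ℝ) * (σ ^ 2)⁻¹ + (τ i ^ 2)⁻¹)⁻¹)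
    (ha : ∀ i, a i = (σ ^ 2)⁻¹ * (1 - ω2 i * (σ ^ 2)⁻¹))
    (hb : ∀ i, b i = -(ω2 i * ((σ ^ 2)⁻¹) ^ 2))
    (F : Matrix (Fin M × Fin d) (Fin M × Fin d) ℝ)
    (hF : ∀ m i m' i', F (m, i) (m', i') =
      if i = i' then (if m = m' then a i else b i) else 0) :
    F.charpoly = (X - C ((σ ^ 2)⁻¹)) ^ ((M - 1) * d)
      * ∏ i : Fin d, (X - C ((σ ^ 2)⁻¹ / (1 + (M : ℝ) * (σ ^ 2)⁻¹ * τ i ^ 2))) := by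
  have : Nonempty (Fin M) := ⟨⟨0, hM⟩⟩
  have hF_block : F = blockDiagonal fun i => of fun m m' => if m = m' then a i else b i := by
    ext ⟨m, i⟩ ⟨m', i'⟩
    rw [hF, blockDiagonal_apply]
    rfl
  have h_bulk : ∀ i, a i - b i = (σ ^ 2)⁻¹ := fun i => by rw [ha, hb]; ring
  have h_mean : ∀ i, a i - b i + M * b i
      = (σ ^ 2)⁻¹ / (1 + (M : ℝ) * (σ ^ 2)⁻¹ * τ i ^ 2) := fun i => by
    have hs : 0 ≤ (σ ^ 2)⁻¹ := by positivity
    have ht : 0 < τ i ^ 2 := pow_pos (hτ i) 2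
    rw [ha, hb, hω2]
    generalize (σ ^ 2)⁻¹ = s at hs ⊢
    generalize τ i ^ 2 = t at ht ⊢
    have : 0 < 1 + M * s * t := by positivity
    field_simp
    ring
  rw [hF_block, charpoly_blockDiagonal]
  simp_rw [charpoly_of_ite_eq, Fintype.card_fin, h_mean, h_bulk]
  rw [Finset.prod_mul_distrib, Finset.prod_const, Finset.card_univ, Fintype.card_fin, ← pow_mul]

/-- The `Md × Md` precision matrix `F` of the Gaussian M-density of
`N(0, diag(τ₁²,…,τ_d²))`, which is block diagonal over coordinates with blocks having
diagonal entries `a i = σ⁻²(1 - ω i² σ⁻²)` and off-diagonal entries `b i = -ω i² σ⁻⁴`,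
`ω i² = (Mσ⁻² + τ i⁻²)⁻¹`, has eigenvalues `σ⁻²` with multiplicity `(M-1)d` and
`σ⁻²/(1 + Mσ⁻²τ i²)` for each `i` (stated via the characteristic polynomial). -/
theorem mdensity_precision_eigenvalues
    (d M : ℕ) (hM : 1 ≤ M) (σ : ℝ) (hσ : 0 < σ)
    (τ : Fin d → ℝ) (hτ : ∀ i, 0 < τ i)
    (ω2 a b : Fin d → ℝ)
    (hω2 : ∀ i, ω2 i = ((M : ℝ) * (σ ^ 2)⁻¹ + (τ i ^ 2)⁻¹)⁻¹)
    (ha : ∀ i, a i = (σ ^ 2)⁻¹ * (1 - ω2 i * (σ ^ 2)⁻¹))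
    (hb : ∀ i, b i = -(ω2 i * ((σ ^ 2)⁻¹) ^ 2))
    (F : Matrix (Fin M × Fin d) (Fin M × Fin d) ℝ)
    (hF : ∀ m i m' i', F (m, i) (m', i') =
      if i = i' then (if m = m' then a i else b i) else 0) :
    F.charpoly = (X - C ((σ ^ 2)⁻¹)) ^ ((M - 1) * d)
      * ∏ i : Fin d, (X - C ((σ ^ 2)⁻¹ / (1 + (M : ℝ) * (σ ^ 2)⁻¹ * τ i ^ 2))) :=
  mdensity_precision_eigenvalues_general d M hM σ τ hτ ω2 a b hω2 ha hb F hF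
end
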